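/- For an Arnoldi aggregation of size j, the transient error vector err_k := p̃_k − p_k satisfies err_k^T = − Σ_{i=j−1}^{k−1} π_0^T H_j^i (h_{j,j+1} e_j q_{j+1}^T) P^{k−1−i} for all k ≥ j, where the terms with index i < j−1 vanish because π_0^T H_j^i is supported on the first i+1 coordinates. -/

import Mathlib

/-
The Arnoldi process yields the matrix identity `Q_j P = H_j Q_j + E_j` with the rank-one
remainder `E_j = h_{j,j+1} e_j q_{j+1}ᵀ`. Iterating it telescopes to
`H_j^k Q_j - Q_j P^k = -∑_{i<k} H_j^i E_j P^{k-1-i}`, and `π₀ᵀ Q_j = p₀ᵀ` turns this into the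
error formula. Since `H_j` is upper Hessenberg, `π₀ᵀ H_j^i` vanishes beyond coordinate `i`,
so it annihilates `E_j`, which lives on the last row, as long as `i < j - 1`.
-/

open Matrix Finset

/-- Euclidean norm of a row vector. -/
noncomputable def norm2 {n : ℕ} (v : Fin n → ℝ) : ℝ := Real.sqrt (v ⬝ᵥ v)

/-- One Gram–Schmidt projection-subtraction step. -/
noncomputable def gsStep {n : ℕ} (r q : Fin n → ℝ) : Fin n → ℝ := r - (r ⬝ᵥ q) • q

/-- List `[q_0, …, q_j]` of Arnoldi vectors after `j` expansion steps applied to `(v, M)`. -/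
noncomputable def arnoldiList {n : ℕ} (v : Fin n → ℝ) (M : Matrix (Fin n) (Fin n) ℝ) :
    ℕ → List (Fin n → ℝ)
  | 0 => [(norm2 v)⁻¹ • v]
  | j + 1 =>
    let qs := arnoldiList v M j
    let r := qs.foldl gsStep (Matrix.vecMul (qs.getLastD 0) M)
    qs ++ [(norm2 r)⁻¹ • r]

/-- The Arnoldi vector `q_{i+1}` of the paper (0-indexed: `aQ v M i`). -/
noncomputable def aQ {n : ℕ} (v : Fin n → ℝ) (M : Matrix (Fin n) (Fin n) ℝ) (i : ℕ) :
    Fin n → ℝ :=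
  (arnoldiList v M i).getLastD 0

/-- Partial residual `r^{(i)}` in outer step `j` (0-indexed): `q_j M` minus the projections
onto `q_0, …, q_{i-1}`. -/
noncomputable def pres {n : ℕ} (v : Fin n → ℝ) (M : Matrix (Fin n) (Fin n) ℝ) (j i : ℕ) :
    Fin n → ℝ :=
  ((arnoldiList v M j).take i).foldl gsStep (Matrix.vecMul (aQ v M j) M)

/-- The Gram–Schmidt coefficient `h_{j,i}` (0-indexed in both arguments). -/
noncomputable def aH {n : ℕ} (v : Fin n → ℝ) (M : Matrix (Fin n) (Fin n) ℝ) (j i : ℕ) : ℝ :=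
  pres v M j i ⬝ᵥ aQ v M i

/-- The subdiagonal coefficient `h_{j, j+1} = ‖r_{j+1}‖₂` (0-indexed in `j`). -/
noncomputable def hsub {n : ℕ} (v : Fin n → ℝ) (M : Matrix (Fin n) (Fin n) ℝ) (j : ℕ) : ℝ :=
  norm2 (pres v M j (j + 1))

/-- The upper-Hessenberg matrix `H_j` produced by `j` Arnoldi steps. -/
noncomputable def arnoldiHmat {n : ℕ} (v : Fin n → ℝ) (M : Matrix (Fin n) (Fin n) ℝ) (j : ℕ) :
    Matrix (Fin j) (Fin j) ℝ := fun i l =>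
  if (l : ℕ) ≤ (i : ℕ) then aH v M i l
  else if (l : ℕ) = (i : ℕ) + 1 then hsub v M i else 0

/-- The matrix `Q_j` whose rows are the Arnoldi vectors `q_1, …, q_j` of the paper. -/
noncomputable def arnoldiQmat {n : ℕ} (v : Fin n → ℝ) (M : Matrix (Fin n) (Fin n) ℝ) (j : ℕ) :
    Matrix (Fin j) (Fin n) ℝ := fun i => aQ v M i

/-- The Krylov subspace `K^j(v, M) = span{v, vM, …, vM^{j-1}}` (of row vectors). -/
noncomputable def krylov {n : ℕ} (v : Fin n → ℝ) (M : Matrix (Fin n) (Fin n) ℝ) (j : ℕ) :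
    Submodule ℝ (Fin n → ℝ) :=
  Submodule.span ℝ (Set.range fun i : Fin j => Matrix.vecMul v (M ^ (i : ℕ)))

section Telescope

variable {R m n : Type*} [Ring R] [Fintype m] [DecidableEq m] [Fintype n] [DecidableEq n]

theorem Matrix.mul_pow_eq_pow_mul_add_sum {A : Matrix m m R} {Q C : Matrix m n R}
    {P : Matrix n n R} (h : Q * P = A * Q + C) (k : ℕ) :
    Q * P ^ k = A ^ k * Q + ∑ i ∈ range k, A ^ i * C * P ^ (k - 1 - i) := by
  induction k with
  | zero => simp
  | succ k ih =>
    have shift : ∀ i ∈ range k, A ^ i * C * P ^ (k - 1 - i) * P = A ^ i * C * P ^ (k - i) := by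
      intro i hi
      rw [Matrix.mul_assoc, ← pow_succ]
      have := mem_range.mp hi
      congr 2
      omega
    rw [pow_succ, ← Matrix.mul_assoc, ih, Matrix.add_mul, Matrix.sum_mul, sum_congr rfl shift,
      Matrix.mul_assoc, h, Matrix.mul_add, sum_range_succ, pow_succ, Nat.add_sub_cancel,
      Nat.sub_self, pow_zero, Matrix.mul_one, Matrix.mul_assoc]
    abel

end Telescope

theorem Matrix.vecMul_pow_apply_eq_zero_of_hessenberg {R : Type*} [Semiring R] {j : ℕ}
    {A : Matrix (Fin j) (Fin j) R} (hA : ∀ t l : Fin j, (t : ℕ) + 1 < l → A t l = 0)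
    {w : Fin j → R} {s : ℕ} (hw : ∀ l : Fin j, s < l → w l = 0) (i : ℕ) :
    ∀ l : Fin j, s + i < l → (w ᵥ* A ^ i) l = 0 := by
  induction i with
  | zero => simpa using hw
  | succ i ih =>
    intro l hl
    rw [pow_succ, ← vecMul_vecMul, vecMul, dotProduct]
    refine sum_eq_zero fun t _ => ?_
    rcases lt_or_ge (s + i) t with ht | ht
    · rw [ih t ht, zero_mul]
    · rw [hA t l (by omega), mul_zero]

section Arnoldi

variable {n : ℕ} (v : Fin n → ℝ) (M : Matrix (Fin n) (Fin n) ℝ)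

theorem eq_zero_of_norm2_eq_zero {w : Fin n → ℝ} (h : norm2 w = 0) : w = 0 :=
  dotProduct_self_eq_zero.mp <|
    le_antisymm (Real.sqrt_eq_zero'.mp h) (sum_nonneg fun i _ => mul_self_nonneg (w i))

theorem norm2_smul_inv_norm2_smul (w : Fin n → ℝ) : norm2 w • (norm2 w)⁻¹ • w = w := by
  rcases eq_or_ne (norm2 w) 0 with h | h
  · rw [h, zero_smul, eq_zero_of_norm2_eq_zero h]
  · rw [smul_smul, mul_inv_cancel₀ h, one_smul]

theorem arnoldiList_length (j : ℕ) : (arnoldiList v M j).length = j + 1 := by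
  induction j with
  | zero => rfl
  | succ j ih => simp [arnoldiList, ih]

theorem arnoldiList_succ (j : ℕ) :
    arnoldiList v M (j + 1) = arnoldiList v M j ++ [(hsub v M j)⁻¹ • pres v M j (j + 1)] := by
  rw [hsub, pres, List.take_of_length_le (arnoldiList_length v M j).le]
  rfl

theorem aQ_succ (j : ℕ) : aQ v M (j + 1) = (hsub v M j)⁻¹ • pres v M j (j + 1) := by
  rw [aQ, arnoldiList_succ, List.getLastD_concat]

theorem hsub_smul_aQ_succ (j : ℕ) : hsub v M j • aQ v M (j + 1) = pres v M j (j + 1) := by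
  rw [aQ_succ, hsub]
  exact norm2_smul_inv_norm2_smul _

theorem getElem_arnoldiList {j i : ℕ} (h : i ≤ j) :
    (arnoldiList v M j)[i]'(by rw [arnoldiList_length]; omega) = aQ v M i := by
  induction j with
  | zero =>
    obtain rfl : i = 0 := by omega
    rfl
  | succ j ih =>
    simp only [arnoldiList_succ]
    rcases h.lt_or_eq with h | rfl
    · rw [List.getElem_append_left (by rw [arnoldiList_length]; omega)]
      exact ih (by omega)
    · simp [List.getElem_append_right, arnoldiList_length, aQ_succ]

theorem pres_succ {j t : ℕ} (h : t ≤ j) :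
    pres v M j (t + 1) = pres v M j t - aH v M j t • aQ v M t := by
  have ht : t < (arnoldiList v M j).length := by rw [arnoldiList_length]; omega
  rw [pres, List.take_add_one, List.getElem?_eq_getElem ht, getElem_arnoldiList v M h]
  simp only [Option.toList_some, List.foldl_append, List.foldl_cons, List.foldl_nil]
  rfl

theorem vecMul_aQ_eq_pres_add_sum (j : ℕ) {t : ℕ} (ht : t ≤ j + 1) :
    aQ v M j ᵥ* M = pres v M j t + ∑ l ∈ range t, aH v M j l • aQ v M l := by
  induction t with
  | zero => simp [pres]
  | succ t ih =>
    rw [pres_succ v M (by omega), sum_range_succ, ih (by omega)]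
    abel

noncomputable def arnoldiCoeff (i l : ℕ) : ℝ :=
  if l ≤ i then aH v M i l else if l = i + 1 then hsub v M i else 0

theorem arnoldiCoeff_eq_zero {i l : ℕ} (h : i + 1 < l) : arnoldiCoeff v M i l = 0 := by
  rw [arnoldiCoeff, if_neg (by omega), if_neg (by omega)]

theorem arnoldiHmat_apply (j : ℕ) (i l : Fin j) : arnoldiHmat v M j i l = arnoldiCoeff v M i l :=
  rfl

theorem vecMul_aQ_eq_sum_arnoldiCoeff (i : ℕ) :
    aQ v M i ᵥ* M = ∑ l ∈ range (i + 2), arnoldiCoeff v M i l • aQ v M l := by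
  have lower : ∀ l ∈ range (i + 1), arnoldiCoeff v M i l • aQ v M l = aH v M i l • aQ v M l :=
    fun l hl => by rw [arnoldiCoeff, if_pos (Nat.lt_succ_iff.mp (mem_range.mp hl))]
  rw [vecMul_aQ_eq_pres_add_sum v M i le_rfl, sum_range_succ _ (i + 1), sum_congr rfl lower,
    add_comm, arnoldiCoeff, if_neg (by omega), if_pos rfl, hsub_smul_aQ_succ]

/-- The remainder `E_j = h_{j,j+1} e_j q_{j+1}ᵀ` of the Arnoldi relation. -/
noncomputable def arnoldiRemainder (j : ℕ) : Matrix (Fin j) (Fin n) ℝ :=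
  hsub v M (j - 1) •
    vecMulVec (fun s : Fin j => if (s : ℕ) + 1 = j then (1 : ℝ) else 0) (aQ v M j)

theorem arnoldiRemainder_apply {j : ℕ} (i : Fin j) :
    arnoldiRemainder v M j i = if (i : ℕ) + 1 = j then hsub v M i • aQ v M (i + 1) else 0 := by
  ext s
  split_ifs with h
  · have hi : j - 1 = i := by omega
    simp [arnoldiRemainder, vecMulVec_apply, h, hi]
  · simp [arnoldiRemainder, vecMulVec_apply, h]

theorem arnoldiQmat_mul (j : ℕ) :
    arnoldiQmat v M j * M = arnoldiHmat v M j * arnoldiQmat v M j + arnoldiRemainder v M j := by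
  funext ⟨i, hi⟩
  change aQ v M i ᵥ* M =
    arnoldiHmat v M j ⟨i, hi⟩ ᵥ* arnoldiQmat v M j + arnoldiRemainder v M j ⟨i, hi⟩
  have row : arnoldiHmat v M j ⟨i, hi⟩ ᵥ* arnoldiQmat v M j =
      ∑ l ∈ range j, arnoldiCoeff v M i l • aQ v M l := by
    rw [vecMul_eq_sum]
    exact Fin.sum_univ_eq_sum_range (fun l => arnoldiCoeff v M i l • aQ v M l) j
  rw [row, arnoldiRemainder_apply, Fin.val_mk, vecMul_aQ_eq_sum_arnoldiCoeff]
  split_ifs with h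
  · subst h
    rw [sum_range_succ _ (i + 1), arnoldiCoeff, if_neg (by omega), if_pos rfl]
  · rw [add_zero]
    refine sum_subset (range_subset_range.mpr (by omega)) fun l hl hl' => ?_
    rw [arnoldiCoeff_eq_zero v M (by simp at hl hl'; omega), zero_smul]

/-- The vector `π₀ = ‖v‖₂ e₁` of the paper. -/
noncomputable def arnoldiStart (j : ℕ) : Fin j → ℝ :=
  fun s => if (s : ℕ) = 0 then norm2 v else 0

theorem arnoldiStart_vecMul_arnoldiQmat {j : ℕ} (hj : 0 < j) :
    arnoldiStart v j ᵥ* arnoldiQmat v M j = v := by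
  rw [vecMul_eq_sum, sum_eq_single ⟨0, hj⟩ (fun l _ hl => ?_) (by simp), arnoldiStart,
    if_pos rfl]
  · exact norm2_smul_inv_norm2_smul v
  · rw [arnoldiStart, if_neg fun h => hl (Fin.ext h), zero_smul]

theorem arnoldiStart_vecMul_pow_apply_eq_zero {j i : ℕ} (l : Fin j) (hl : i < l) :
    (arnoldiStart v j ᵥ* arnoldiHmat v M j ^ i) l = 0 :=
  vecMul_pow_apply_eq_zero_of_hessenberg
    (fun t l htl => by rw [arnoldiHmat_apply, arnoldiCoeff_eq_zero v M htl])
    (fun l hl => if_neg hl.ne') i l (by omega)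

theorem arnoldiStart_vecMul_pow_vecMul_arnoldiRemainder {j i : ℕ} (hi : i + 1 < j) :
    arnoldiStart v j ᵥ* arnoldiHmat v M j ^ i ᵥ* arnoldiRemainder v M j = 0 := by
  rw [arnoldiRemainder, vecMul_smul, vecMul_vecMulVec, dotProduct,
    sum_eq_zero fun l _ => ?_, zero_smul, smul_zero]
  split_ifs with hl
  · rw [arnoldiStart_vecMul_pow_apply_eq_zero v M l (by omega), zero_mul]
  · rw [mul_zero]

end Arnoldi

theorem arnoldi_error_closed_form_general {n j : ℕ} (hj : 0 < j)
    (P : Matrix (Fin n) (Fin n) ℝ)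
    (p₀ : Fin n → ℝ) :
    ∀ k : ℕ, j ≤ k →
      Matrix.vecMul
          (Matrix.vecMul (fun s : Fin j => if (s : ℕ) = 0 then norm2 p₀ else 0)
            ((arnoldiHmat p₀ P j) ^ k))
          (arnoldiQmat p₀ P j)
        - Matrix.vecMul p₀ (P ^ k) =
      -(∑ i ∈ Finset.Ico (j - 1) k,
          Matrix.vecMul
            (Matrix.vecMul
              (Matrix.vecMul (fun s : Fin j => if (s : ℕ) = 0 then norm2 p₀ else 0)
                ((arnoldiHmat p₀ P j) ^ i))
              (hsub p₀ P (j - 1) •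
                Matrix.vecMulVec (fun s : Fin j => if (s : ℕ) + 1 = j then (1 : ℝ) else 0)
                  (aQ p₀ P j)))
            (P ^ (k - 1 - i))) := by
  intro k hk
  set π₀ := arnoldiStart p₀ j
  set H := arnoldiHmat p₀ P j
  set Q := arnoldiQmat p₀ P j
  set E := arnoldiRemainder p₀ P j
  change π₀ ᵥ* H ^ k ᵥ* Q - p₀ ᵥ* P ^ k =
    -∑ i ∈ Ico (j - 1) k, π₀ ᵥ* H ^ i ᵥ* E ᵥ* P ^ (k - 1 - i)
  have early_terms_vanish : ∀ i ∈ range (j - 1), π₀ ᵥ* H ^ i ᵥ* E ᵥ* P ^ (k - 1 - i) = 0 :=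
    fun i hi => by
      rw [arnoldiStart_vecMul_pow_vecMul_arnoldiRemainder p₀ P (by simp at hi; omega),
        zero_vecMul]
  calc π₀ ᵥ* H ^ k ᵥ* Q - p₀ ᵥ* P ^ k
      = π₀ ᵥ* (H ^ k * Q - Q * P ^ k) := by
        rw [vecMul_sub, ← vecMul_vecMul, ← vecMul_vecMul π₀ Q,
          arnoldiStart_vecMul_arnoldiQmat p₀ P hj]
    _ = -∑ i ∈ range k, π₀ ᵥ* H ^ i ᵥ* E ᵥ* P ^ (k - 1 - i) := by
        rw [mul_pow_eq_pow_mul_add_sum (arnoldiQmat_mul p₀ P j), sub_add_cancel_left,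
          vecMul_neg, vecMul_sum]
        simp only [vecMul_vecMul]
        rfl
    _ = -∑ i ∈ Ico (j - 1) k, π₀ ᵥ* H ^ i ᵥ* E ᵥ* P ^ (k - 1 - i) := by
        rw [← sum_range_add_sum_Ico _ (by omega : j - 1 ≤ k), sum_eq_zero early_terms_vanish,
          zero_add]

/-- closed form for the transient error of an Arnoldi aggregation of size `j`:
`err_k = −Σ_{i=j-1}^{k-1} π₀ H_j^i (h_{j,j+1} e_j q_{j+1}^T) P^{k-1-i}` for `k ≥ j`. -/
theorem arnoldi_error_closed_form {n j : ℕ} (hj : 0 < j)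
    (P : Matrix (Fin n) (Fin n) ℝ)
    (hPnn : ∀ i l, 0 ≤ P i l) (hProw : ∀ i, ∑ l, P i l = 1)
    (p₀ : Fin n → ℝ) (hp₀nn : ∀ s, 0 ≤ p₀ s) (hp₀sum : ∑ s, p₀ s = 1)
    (hrun : ∀ i, i + 1 < j → hsub p₀ P i ≠ 0) :
    ∀ k : ℕ, j ≤ k →
      Matrix.vecMul
          (Matrix.vecMul (fun s : Fin j => if (s : ℕ) = 0 then norm2 p₀ else 0)
            ((arnoldiHmat p₀ P j) ^ k))
          (arnoldiQmat p₀ P j)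
        - Matrix.vecMul p₀ (P ^ k) =
      -(∑ i ∈ Finset.Ico (j - 1) k,
          Matrix.vecMul
            (Matrix.vecMul
              (Matrix.vecMul (fun s : Fin j => if (s : ℕ) = 0 then norm2 p₀ else 0)
                ((arnoldiHmat p₀ P j) ^ i))
              (hsub p₀ P (j - 1) •
                Matrix.vecMulVec (fun s : Fin j => if (s : ℕ) + 1 = j then (1 : ℝ) else 0)
                  (aQ p₀ P j)))
            (P ^ (k - 1 - i))) :=
  arnoldi_error_closed_form_general hj P p₀
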